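/- Let Θ be an inner function with values in L(E), let Θ̃(z) = Θ(z̄)*, and let τ be the unitary operator from K_Θ onto K_Θ̃ given by (τf)(e^{it}) = e^{-it} Θ(e^{-it})* f(e^{-it}). Then τ* T_Θ̃ τ ⊆ T_Θ: for every bounded operator B ∈ T_Θ̃, the operator τ* B τ on K_Θ belongs to T_Θ. -/

import Mathlib

open MeasureTheory Complex ContinuousLinearMap
open scoped ComplexInnerProductSpace

noncomputable section

/-- The circle `𝕋`, realized as `ℝ / 2πℤ`; the point `t` corresponds to `e^{it}`. -/
abbrev Circle2pi : Type := AddCircle (2 * Real.pi)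

instance : Fact (0 < 2 * Real.pi) := ⟨by positivity⟩

/-- Normalized Haar (arc-length) measure on the circle. -/
abbrev haarCircle2pi : Measure Circle2pi := AddCircle.haarAddCircle

variable {E : Type} [NormedAddCommGroup E] [InnerProductSpace ℂ E] [FiniteDimensional ℂ E]

/-- `Θ`, given by its boundary-value function on the circle, is an inner function: it is
(a.e. strongly) measurable, its boundary values are a.e. unitary operators on `E`, and its
Fourier coefficients of negative index vanish (the latter says exactly that `Θ` is the
boundary-value function of a bounded analytic `L(E)`-valued function on the unit disc,
i.e. an element of `H^∞(L(E))`). -/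
structure IsInner (Θ : Circle2pi → (E →L[ℂ] E)) : Prop where
  meas : AEStronglyMeasurable Θ haarCircle2pi
  unit : ∀ᵐ t ∂haarCircle2pi, Θ t ∈ unitary (E →L[ℂ] E)
  anal : ∀ n : ℤ, n < 0 → fourierCoeff Θ n = 0

/-- Membership in the Hardy space `H²(E)`, viewed as the subspace of `L²(E)` of functions
whose Fourier coefficients of negative index vanish. -/
def MemH2 (f : Lp E 2 haarCircle2pi) : Prop :=
  ∀ n : ℤ, n < 0 → fourierCoeff (⇑f) n = 0

/-- Membership in the model space `K_Θ = H²(E) ⊖ Θ H²(E)`: `f` belongs to `H²(E)` and is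
orthogonal to `Θ H²(E)`. -/
def MemK (Θ : Circle2pi → (E →L[ℂ] E)) (f : Lp E 2 haarCircle2pi) : Prop :=
  MemH2 f ∧ ∀ g : Lp E 2 haarCircle2pi, MemH2 g →
    ∫ t, ⟪f t, Θ t (g t)⟫ ∂haarCircle2pi = 0

/-- The boundary values of `Θ̃(z) = Θ(z̄)*`, namely `Θ̃(e^{it}) = Θ(e^{-it})*`. -/
def tild (Θ : Circle2pi → (E →L[ℂ] E)) : Circle2pi → (E →L[ℂ] E) :=
  fun t => adjoint (Θ (-t))

/-- `τ` is the operator on `L²(E)` given by `(τ f)(e^{it}) = e^{-it} Θ(e^{-it})* f(e^{-it})`. -/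
def IsTau (Θ : Circle2pi → (E →L[ℂ] E))
    (τ : Lp E 2 haarCircle2pi →L[ℂ] Lp E 2 haarCircle2pi) : Prop :=
  ∀ f : Lp E 2 haarCircle2pi,
    (⇑(τ f)) =ᵐ[haarCircle2pi] fun t => fourier (-1) t • (adjoint (Θ (-t))) (f (-t))

/-- `P` is the orthogonal projection of `L²(E)` onto the model space `K_Θ`:
its range lies in `K_Θ`, it fixes `K_Θ`, and `f - P f` is orthogonal to `K_Θ`. -/
def IsProjK (Θ : Circle2pi → (E →L[ℂ] E))
    (P : Lp E 2 haarCircle2pi →L[ℂ] Lp E 2 haarCircle2pi) : Prop :=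
  (∀ f, MemK Θ (P f)) ∧ (∀ f, MemK Θ f → P f = f) ∧
    ∀ f g, MemK Θ g → ⟪f - P f, g⟫ = 0

/-- `S` acts on the model space `K_Θ` as the compressed shift `S_Θ f = P_Θ (z f)`:
for `f ∈ K_Θ`, `S f ∈ K_Θ` and `S f - z f` is orthogonal to `K_Θ`, i.e.
`⟪S f, g⟫ = ⟪z f, g⟫` for all `g ∈ K_Θ`. -/
def IsCompShift (Θ : Circle2pi → (E →L[ℂ] E))
    (S : Lp E 2 haarCircle2pi →L[ℂ] Lp E 2 haarCircle2pi) : Prop :=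
  ∀ f, MemK Θ f → MemK Θ (S f) ∧
    ∀ g, MemK Θ g → ⟪S f, g⟫ = ∫ t, ⟪fourier 1 t • f t, g t⟫ ∂haarCircle2pi

/-- `A` acts on the model space `K_Θ` as the adjoint `S_Θ*` of the compressed shift `S`:
for `f ∈ K_Θ`, `A f ∈ K_Θ` and `⟪A f, g⟫ = ⟪f, S g⟫` for all `g ∈ K_Θ`. -/
def IsCompShiftAdj (Θ : Circle2pi → (E →L[ℂ] E))
    (S A : Lp E 2 haarCircle2pi →L[ℂ] Lp E 2 haarCircle2pi) : Prop :=
  ∀ f, MemK Θ f → MemK Θ (A f) ∧ ∀ g, MemK Θ g → ⟪A f, g⟫ = ⟪f, S g⟫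

/-- The subspace `D = {(I - Θ(z) Θ(0)*) x : x ∈ E}` of `K_Θ`, described through boundary
values; here `Θ(0)` is the 0-th Fourier coefficient of `Θ`. -/
def DSet (Θ : Circle2pi → (E →L[ℂ] E)) : Set (Lp E 2 haarCircle2pi) :=
  {f | ∃ x : E, (⇑f) =ᵐ[haarCircle2pi]
    fun t => x - Θ t (adjoint (fourierCoeff Θ 0) x)}

/-- The subspace `D_* = {(1/z)(Θ(z) - Θ(0)) x : x ∈ E}` of `K_Θ`, described through
boundary values. -/
def DStarSet (Θ : Circle2pi → (E →L[ℂ] E)) : Set (Lp E 2 haarCircle2pi) :=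
  {f | ∃ x : E, (⇑f) =ᵐ[haarCircle2pi]
    fun t => fourier (-1) t • (Θ t x - fourierCoeff Θ 0 x)}

/-- `A` is a matrix-valued truncated Toeplitz operator on `K_Θ`, i.e. `A ∈ T_Θ`: there is a
symbol `Φ ∈ L²(L(E))` such that `A f = P_Θ (Φ f)` for every `f` in
`K_Θ^∞ = K_Θ ∩ H^∞(E)`; the compression is expressed by: `A f ∈ K_Θ` and
`⟪A f, g⟫ = ⟪Φ f, g⟫` for every `g ∈ K_Θ`. -/
def MemTT (Θ : Circle2pi → (E →L[ℂ] E))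
    (A : Lp E 2 haarCircle2pi →L[ℂ] Lp E 2 haarCircle2pi) : Prop :=
  ∃ Φ : Circle2pi → (E →L[ℂ] E), MemLp Φ 2 haarCircle2pi ∧
    ∀ f, MemK Θ f → MemLp (⇑f) ⊤ haarCircle2pi →
      MemK Θ (A f) ∧ ∀ g, MemK Θ g → ⟪A f, g⟫ = ∫ t, ⟪Φ t (f t), g t⟫ ∂haarCircle2pi


/-!
Write `J u (t) = e^{-it} u(-t)` (`circleFlip`), so that `τ f = J (Θ* f)`. The map `J` moves the
Fourier coefficient of index `-n-1` to index `n`, hence exchanges `H²(E)` with its orthogonal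
complement, and it is symmetric for the pairing `∫ ⟪u, v⟫`. For `f ∈ K_Θ` the function `Θ* f` has
no Fourier coefficients of index `≥ 0`; together with the unitarity of `Θ` this gives
`τ K_Θ ⊆ K_Θ̃`, and `τ*` turns out to be the map `τ` built from `Θ̃`. If `Ψ` is a symbol of `B`,
the substitution `t ↦ -t` in `⟪B τ f, τ g⟫ = ∫ ⟪Ψ τ f, τ g⟫` yields `∫ ⟪Θ(t) Ψ(-t) Θ(t)* f, g⟫`,
so `Θ(t) Ψ(-t) Θ(t)*`, which is in `L²` because `Θ` is unitary-valued, is a symbol of `τ* B τ`.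
-/

open scoped ENNReal ComplexConjugate

section UnitaryMultiplier

variable {α H : Type*} [MeasurableSpace α] {μ : Measure α}
  [NormedAddCommGroup H] [InnerProductSpace ℂ H] [CompleteSpace H]
  {U : α → H →L[ℂ] H} {p : ℝ≥0∞}

theorem MeasureTheory.AEStronglyMeasurable.adjoint (hU : AEStronglyMeasurable U μ) :
    AEStronglyMeasurable (fun t => adjoint (U t)) μ := by
  simpa only [star_eq_adjoint] using continuous_star.comp_aestronglyMeasurable hU

theorem MeasureTheory.MemLp.apply_of_ae_mem_unitary (hU : AEStronglyMeasurable U μ)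
    (hUu : ∀ᵐ t ∂μ, U t ∈ unitary (H →L[ℂ] H)) {f : α → H} (hf : MemLp f p μ) :
    MemLp (fun t => U t (f t)) p μ :=
  hf.of_le ((ContinuousLinearMap.id ℂ (H →L[ℂ] H)).aestronglyMeasurable_comp₂ hU hf.1)
    (hUu.mono fun _ ht => (norm_map_of_mem_unitary ht _).le)

theorem MeasureTheory.MemLp.conj_of_ae_mem_unitary (hU : AEStronglyMeasurable U μ)
    (hUu : ∀ᵐ t ∂μ, U t ∈ unitary (H →L[ℂ] H)) {Ψ : α → H →L[ℂ] H} (hΨ : MemLp Ψ p μ) :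
    MemLp (fun t => U t ∘L (Ψ t ∘L adjoint (U t))) p μ := by
  refine hΨ.of_le ((compL ℂ H H H).aestronglyMeasurable_comp₂ hU
    ((compL ℂ H H H).aestronglyMeasurable_comp₂ hΨ.1 hU.adjoint)) (hUu.mono fun t ht => ?_)
  rw [← star_eq_adjoint, ← mul_def, ← mul_def, CStarRing.norm_mem_unitary_mul _ ht,
    CStarRing.norm_mul_mem_unitary _ (Unitary.star_mem ht)]

end UnitaryMultiplier

section Circle

open AddCircle

variable {T : ℝ}

theorem fourier_apply_neg (n : ℤ) (t : AddCircle T) : fourier n (-t) = fourier (-n) t := by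
  simp [fourier_apply]

theorem fourier_mul_conj (n : ℤ) (t : AddCircle T) : fourier n t * conj (fourier n t) = 1 := by
  rw [mul_conj', fourier_apply, Circle.norm_coe, ofReal_one, one_pow]

def circleFlip {F : Type*} [NormedAddCommGroup F] [NormedSpace ℂ F] (u : AddCircle T → F)
    (t : AddCircle T) : F :=
  fourier (-1) t • u (-t)

theorem circleFlip_apply {F : Type*} [NormedAddCommGroup F] [NormedSpace ℂ F]
    (u : AddCircle T → F) (t : AddCircle T) : circleFlip u t = fourier (-1) t • u (-t) :=
  rfl

variable [Fact (0 < T)]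

theorem memLp_fourier (n : ℤ) : MemLp (fun t => fourier n t) ⊤ (haarAddCircle (T := T)) :=
  (Lp.memLp (fourierLp ⊤ n)).ae_eq (coeFn_fourierLp ⊤ n)

section Normed

variable {F : Type*} [NormedAddCommGroup F] [NormedSpace ℂ F]

theorem fourierCoeff_comp_neg (u : AddCircle T → F) (n : ℤ) :
    fourierCoeff (fun t => u (-t)) n = fourierCoeff u (-n) := by
  rw [fourierCoeff, ← integral_neg_eq_self]
  simp only [fourier_apply_neg, neg_neg, fourierCoeff]

theorem fourierCoeff_fourier_smul (u : AddCircle T → F) (k n : ℤ) :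
    fourierCoeff (fun t => fourier k t • u t) n = fourierCoeff u (n - k) := by
  simp only [fourierCoeff, smul_smul, ← fourier_add, neg_sub', sub_neg_eq_add]

theorem ContinuousLinearMap.fourierCoeff_comp {G : Type*} [NormedAddCommGroup G]
    [NormedSpace ℂ G] [CompleteSpace F] [CompleteSpace G] (L : F →L[ℂ] G) {u : AddCircle T → F}
    (hu : Integrable u haarAddCircle) (n : ℤ) :
    fourierCoeff (fun t => L (u t)) n = L (fourierCoeff u n) := by
  simp only [fourierCoeff, ← L.map_smul]
  exact L.integral_comp_comm (hu.fourier_smul _)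

theorem fourierCoeff_fourier_smul_const_of_ne [CompleteSpace F] {k n : ℤ} (hkn : n ≠ k)
    (x : F) : fourierCoeff (fun t : AddCircle T => fourier k t • x) n = 0 := by
  have h := congrFun (fourierCoeff_fourier (T := T) k) n
  rw [Pi.single_eq_of_ne hkn, fourierCoeff] at h
  simp only [fourierCoeff, ← smul_assoc, integral_smul_const, h, zero_smul]

theorem fourierCoeff_circleFlip (u : AddCircle T → F) (n : ℤ) :
    fourierCoeff (circleFlip u) n = fourierCoeff u (-(n + 1)) := by
  rw [funext (circleFlip_apply u), fourierCoeff_fourier_smul (fun t => u (-t)),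
    fourierCoeff_comp_neg, sub_neg_eq_add]

theorem MeasureTheory.MemLp.circleFlip {u : AddCircle T → F} {p : ℝ≥0∞}
    (hu : MemLp u p AddCircle.haarAddCircle) : MemLp (circleFlip u) p AddCircle.haarAddCircle :=
  (hu.comp_measurePreserving (Measure.measurePreserving_neg _)).smul (memLp_fourier (-1))

end Normed

section Inner

variable {F : Type*} [NormedAddCommGroup F] [InnerProductSpace ℂ F]

theorem integral_inner_circleFlip_left (u v : AddCircle T → F) :
    ∫ t, ⟪circleFlip u t, v t⟫ ∂haarAddCircle = ∫ t, ⟪u t, circleFlip v t⟫ ∂haarAddCircle := by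
  rw [← integral_neg_eq_self]
  simp only [circleFlip, inner_smul_left, inner_smul_right, fourier_apply_neg, neg_neg,
    fourier_neg]

theorem integral_inner_apply_circleFlip (Ψ : AddCircle T → F →L[ℂ] F) (u v : AddCircle T → F) :
    ∫ t, ⟪Ψ t (circleFlip u t), circleFlip v t⟫ ∂haarAddCircle
      = ∫ t, ⟪Ψ (-t) (u t), v t⟫ ∂haarAddCircle := by
  rw [← integral_neg_eq_self]
  simp only [circleFlip, map_smul, inner_smul_left, inner_smul_right, ← mul_assoc,
    fourier_mul_conj, one_mul, neg_neg]

end Inner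

section Parseval

theorem integral_conj_mul_eq_zero_of_fourierCoeff {u v : AddCircle T → ℂ}
    (hu : MemLp u 2 haarAddCircle) (hv : MemLp v 2 haarAddCircle)
    (h : ∀ n, fourierCoeff u n = 0 ∨ fourierCoeff v n = 0) :
    ∫ t, conj (u t) * v t ∂haarAddCircle = 0 := by
  have hLp : ⟪hu.toLp u, hv.toLp v⟫ = 0 := by
    rw [← fourierBasis.tsum_inner_mul_inner]
    refine (tsum_congr fun n => ?_).trans tsum_zero
    rw [← inner_conj_symm, ← HilbertBasis.repr_apply_apply, ← HilbertBasis.repr_apply_apply,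
      fourierBasis_repr, fourierBasis_repr, fourierCoeff_congr_ae hu.coeFn_toLp,
      fourierCoeff_congr_ae hv.coeFn_toLp]
    rcases h n with h0 | h0 <;> simp [h0]
  rw [L2.inner_def] at hLp
  rw [← hLp]
  refine integral_congr_ae ?_
  filter_upwards [hu.coeFn_toLp, hv.coeFn_toLp] with t hut hvt
  rw [hut, hvt, RCLike.inner_apply, mul_comm]

variable {F : Type*} [NormedAddCommGroup F] [InnerProductSpace ℂ F] [FiniteDimensional ℂ F]

theorem integral_inner_eq_zero_of_fourierCoeff {u v : AddCircle T → F}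
    (hu : MemLp u 2 haarAddCircle) (hv : MemLp v 2 haarAddCircle)
    (h : ∀ n, fourierCoeff u n = 0 ∨ fourierCoeff v n = 0) :
    ∫ t, ⟪u t, v t⟫ ∂haarAddCircle = 0 := by
  let b := stdOrthonormalBasis ℂ F
  have hmem {w : AddCircle T → F} (hw : MemLp w 2 haarAddCircle) (i) :
      MemLp (fun t => ⟪b i, w t⟫) 2 haarAddCircle :=
    (innerSL ℂ (b i)).comp_memLp' hw
  have hcoeff {w : AddCircle T → F} (hw : MemLp w 2 haarAddCircle) (i n) :
      fourierCoeff (fun t => ⟪b i, w t⟫) n = ⟪b i, fourierCoeff w n⟫ :=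
    (innerSL ℂ (b i)).fourierCoeff_comp (hw.integrable one_le_two) n
  calc ∫ t, ⟪u t, v t⟫ ∂haarAddCircle
      = ∫ t, ∑ i, conj ⟪b i, u t⟫ * ⟪b i, v t⟫ ∂haarAddCircle := by
        simp_rw [inner_conj_symm, b.sum_inner_mul_inner]
    _ = ∑ i, ∫ t, conj ⟪b i, u t⟫ * ⟪b i, v t⟫ ∂haarAddCircle :=
        integral_finsetSum _ fun i _ => (hmem hu i).star.integrable_mul (hmem hv i)
    _ = 0 := Finset.sum_eq_zero fun i _ =>
        integral_conj_mul_eq_zero_of_fourierCoeff (hmem hu i) (hmem hv i) fun n => by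
          rw [hcoeff hu, hcoeff hv]
          rcases h n with h0 | h0 <;> simp [h0]

end Parseval

end Circle

section ModelSpace

variable {Θ : Circle2pi → E →L[ℂ] E}

theorem tild_tild (Θ : Circle2pi → E →L[ℂ] E) : tild (tild Θ) = Θ := by
  funext t
  simp only [tild, neg_neg, adjoint_adjoint]

theorem fourierCoeff_tild (Θ : Circle2pi → E →L[ℂ] E) (n : ℤ) :
    fourierCoeff (tild Θ) n = star (fourierCoeff Θ n) := by
  calc fourierCoeff (tild Θ) n
      = ∫ t, starL' ℝ (fourier (-n) t • Θ t) ∂haarCircle2pi := by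
        rw [fourierCoeff, ← integral_neg_eq_self]
        congr 1 with t
        simp only [tild, neg_neg, fourier_apply_neg, starL'_apply, star_smul, ← star_eq_adjoint,
          ← fourier_neg, RCLike.star_def]
    _ = star (fourierCoeff Θ n) := (starL' ℝ).integral_comp_comm _

theorem IsInner.ae_adjoint_mem_unitary (hΘ : IsInner Θ) :
    ∀ᵐ t ∂haarCircle2pi, adjoint (Θ t) ∈ unitary (E →L[ℂ] E) :=
  hΘ.unit.mono fun _ ht => by simpa only [star_eq_adjoint] using Unitary.star_mem ht

theorem IsInner.tild (hΘ : IsInner Θ) : IsInner (tild Θ) where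
  meas := (hΘ.meas.comp_measurePreserving (Measure.measurePreserving_neg _)).adjoint
  unit := (Measure.measurePreserving_neg _).quasiMeasurePreserving.ae hΘ.ae_adjoint_mem_unitary
  anal n hn := by rw [fourierCoeff_tild, hΘ.anal n hn, star_zero]

theorem IsInner.memLp_apply (hΘ : IsInner Θ) {f : Circle2pi → E} {p : ℝ≥0∞}
    (hf : MemLp f p haarCircle2pi) : MemLp (fun t => Θ t (f t)) p haarCircle2pi :=
  hf.apply_of_ae_mem_unitary hΘ.meas hΘ.unit

theorem IsInner.memLp_adjoint_apply (hΘ : IsInner Θ) {f : Circle2pi → E} {p : ℝ≥0∞}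
    (hf : MemLp f p haarCircle2pi) : MemLp (fun t => adjoint (Θ t) (f t)) p haarCircle2pi :=
  hf.apply_of_ae_mem_unitary hΘ.meas.adjoint hΘ.ae_adjoint_mem_unitary

theorem exists_memH2_coeFn_eq_fourier_smul {n : ℤ} (hn : 0 ≤ n) (x : E) :
    ∃ g : Lp E 2 haarCircle2pi, MemH2 g ∧ ⇑g =ᵐ[haarCircle2pi] fun t => fourier n t • x := by
  have hmem : MemLp (fun t : Circle2pi => fourier n t • x) 2 haarCircle2pi :=
    (memLp_const (p := 2) x).smul (memLp_fourier n)
  refine ⟨hmem.toLp _, fun m hm => ?_, hmem.coeFn_toLp⟩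
  rw [fourierCoeff_congr_ae hmem.coeFn_toLp, fourierCoeff_fourier_smul_const_of_ne (by omega)]

theorem MemH2.integral_inner_circleFlip_eq_zero {f g : Lp E 2 haarCircle2pi} (hf : MemH2 f)
    (hg : MemH2 g) : ∫ t, ⟪f t, circleFlip g t⟫ ∂haarCircle2pi = 0 :=
  integral_inner_eq_zero_of_fourierCoeff (Lp.memLp f) (Lp.memLp g).circleFlip fun n =>
    (lt_or_ge n 0).imp (hf n) fun hn => by
      rw [fourierCoeff_circleFlip]
      exact hg _ (by omega)

theorem MemK.fourierCoeff_adjoint_apply_eq_zero (hΘ : IsInner Θ) {f : Lp E 2 haarCircle2pi}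
    (hf : MemK Θ f) {n : ℤ} (hn : 0 ≤ n) :
    fourierCoeff (fun t => adjoint (Θ t) (f t)) n = 0 := by
  refine ext_inner_left ℂ fun v => ?_
  obtain ⟨g, hg, hgv⟩ := exists_memH2_coeFn_eq_fourier_smul hn v
  have hcomm := (innerSL ℂ v).fourierCoeff_comp
    ((hΘ.memLp_adjoint_apply (Lp.memLp f)).integrable one_le_two) n
  simp only [innerSL_apply_apply] at hcomm
  rw [inner_zero_right, ← hcomm]
  calc fourierCoeff (fun t => ⟪v, adjoint (Θ t) (f t)⟫) n
      = ∫ t, conj ⟪f t, Θ t (g t)⟫ ∂haarCircle2pi := by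
        refine integral_congr_ae (hgv.mono fun t ht => ?_)
        dsimp only at ht ⊢
        rw [ht, inner_conj_symm, map_smul, inner_smul_left, adjoint_inner_right, fourier_neg,
          smul_eq_mul]
    _ = 0 := by rw [integral_conj, hf.2 g hg, map_zero]

variable {τ : Lp E 2 haarCircle2pi →L[ℂ] Lp E 2 haarCircle2pi}

theorem IsTau.ae_eq_circleFlip (hτ : IsTau Θ τ) (f : Lp E 2 haarCircle2pi) :
    ⇑(τ f) =ᵐ[haarCircle2pi] circleFlip fun t => adjoint (Θ t) (f t) :=
  hτ f

theorem IsTau.memK_apply (hτ : IsTau Θ τ) (hΘ : IsInner Θ) {f : Lp E 2 haarCircle2pi}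
    (hf : MemK Θ f) : MemK (tild Θ) (τ f) := by
  refine ⟨fun n hn => ?_, fun g hg => ?_⟩
  · rw [fourierCoeff_congr_ae (hτ.ae_eq_circleFlip f), fourierCoeff_circleFlip]
    exact hf.fourierCoeff_adjoint_apply_eq_zero hΘ (by omega)
  · calc ∫ t, ⟪τ f t, tild Θ t (g t)⟫ ∂haarCircle2pi
        = ∫ t, ⟪circleFlip (fun s => adjoint (Θ s) (f s)) t, tild Θ t (g t)⟫ ∂haarCircle2pi :=
          integral_congr_ae <| by filter_upwards [hτ.ae_eq_circleFlip f] with t ht; rw [ht]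
      _ = ∫ t, ⟪adjoint (Θ t) (f t), circleFlip (fun s => tild Θ s (g s)) t⟫ ∂haarCircle2pi :=
          integral_inner_circleFlip_left _ _
      _ = ∫ t, ⟪f t, circleFlip g t⟫ ∂haarCircle2pi := by
          refine integral_congr_ae ?_
          filter_upwards [hΘ.ae_adjoint_mem_unitary] with t ht
          rw [circleFlip_apply, circleFlip_apply, tild, neg_neg, ← map_smul,
            inner_map_map_of_mem_unitary ht]
      _ = 0 := hf.1.integral_inner_circleFlip_eq_zero hg

theorem IsTau.isTau_adjoint (hτ : IsTau Θ τ) (hΘ : IsInner Θ) : IsTau (tild Θ) (adjoint τ) := by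
  intro h
  have hw : MemLp (fun t => Θ t (circleFlip h t)) 2 haarCircle2pi :=
    hΘ.memLp_apply (Lp.memLp h).circleFlip
  have key : adjoint τ h = hw.toLp _ := ext_inner_right ℂ fun k => by
    rw [adjoint_inner_left, L2.inner_def, L2.inner_def]
    calc ∫ t, ⟪h t, τ k t⟫ ∂haarCircle2pi
        = ∫ t, ⟪h t, circleFlip (fun s => adjoint (Θ s) (k s)) t⟫ ∂haarCircle2pi :=
          integral_congr_ae <| by filter_upwards [hτ.ae_eq_circleFlip k] with t ht; rw [ht]
      _ = ∫ t, ⟪circleFlip h t, adjoint (Θ t) (k t)⟫ ∂haarCircle2pi :=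
          (integral_inner_circleFlip_left _ _).symm
      _ = ∫ t, ⟪hw.toLp _ t, k t⟫ ∂haarCircle2pi :=
          integral_congr_ae <| by
            filter_upwards [hw.coeFn_toLp] with t ht
            rw [ht, adjoint_inner_right]
  rw [key]
  filter_upwards [hw.coeFn_toLp] with t ht
  rw [ht, tild, neg_neg, adjoint_adjoint, circleFlip_apply, map_smul]

theorem IsTau.memLp_top_apply (hτ : IsTau Θ τ) (hΘ : IsInner Θ) {f : Lp E 2 haarCircle2pi}
    (hf : MemLp f ⊤ haarCircle2pi) : MemLp (τ f) ⊤ haarCircle2pi :=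
  (hΘ.memLp_adjoint_apply hf).circleFlip.ae_eq (hτ.ae_eq_circleFlip f).symm

theorem IsTau.integral_inner_apply (hτ : IsTau Θ τ) (Ψ : Circle2pi → E →L[ℂ] E)
    (f g : Lp E 2 haarCircle2pi) :
    ∫ t, ⟪Ψ t (τ f t), τ g t⟫ ∂haarCircle2pi
      = ∫ t, ⟪Θ t (Ψ (-t) (adjoint (Θ t) (f t))), g t⟫ ∂haarCircle2pi := by
  calc ∫ t, ⟪Ψ t (τ f t), τ g t⟫ ∂haarCircle2pi
      = ∫ t, ⟪Ψ t (circleFlip (fun s => adjoint (Θ s) (f s)) t),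
          circleFlip (fun s => adjoint (Θ s) (g s)) t⟫ ∂haarCircle2pi := by
        refine integral_congr_ae ?_
        filter_upwards [hτ.ae_eq_circleFlip f, hτ.ae_eq_circleFlip g] with t hf hg
        rw [hf, hg]
    _ = ∫ t, ⟪Ψ (-t) (adjoint (Θ t) (f t)), adjoint (Θ t) (g t)⟫ ∂haarCircle2pi :=
        integral_inner_apply_circleFlip _ _ _
    _ = _ := by simp only [adjoint_inner_right]

end ModelSpace

/-- Let `Θ` be inner, `Θ̃(z) = Θ(z̄)*`, and `τ` the unitary operator
`(τ f)(e^{it}) = e^{-it} Θ(e^{-it})* f(e^{-it})` mapping `K_Θ` onto `K_Θ̃`. Then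
`τ* T_Θ̃ τ ⊆ T_Θ`: for every bounded operator `B ∈ T_Θ̃`, the operator `τ* B τ` on
`K_Θ` belongs to `T_Θ`. -/
theorem tau_adj_TT_tau_subset (Θ : Circle2pi → (E →L[ℂ] E)) (hΘ : IsInner Θ)
    (τ : Lp E 2 haarCircle2pi →L[ℂ] Lp E 2 haarCircle2pi) (hτ : IsTau Θ τ) :
    ∀ B : Lp E 2 haarCircle2pi →L[ℂ] Lp E 2 haarCircle2pi,
      (∀ f, MemK (tild Θ) f → MemK (tild Θ) (B f)) → MemTT (tild Θ) B →
      MemTT Θ ((adjoint τ).comp (B.comp τ)) := by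
  rintro B - ⟨Ψ, hΨ, hBΨ⟩
  refine ⟨fun t => Θ t ∘L (Ψ (-t) ∘L adjoint (Θ t)),
    (hΨ.comp_measurePreserving (Measure.measurePreserving_neg _)).conj_of_ae_mem_unitary
      hΘ.meas hΘ.unit, fun f hf hf_top => ?_⟩
  obtain ⟨hBτf, hBτf_inner⟩ := hBΨ (τ f) (hτ.memK_apply hΘ hf) (hτ.memLp_top_apply hΘ hf_top)
  have hτ' := hτ.isTau_adjoint hΘ
  refine ⟨by simpa only [tild_tild, comp_apply] using hτ'.memK_apply hΘ.tild hBτf, fun g hg => ?_⟩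
  rw [comp_apply, comp_apply, adjoint_inner_left, hBτf_inner (τ g) (hτ.memK_apply hΘ hg),
    hτ.integral_inner_apply]
  rfl
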